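/- Let R be a Krasner (m,n)-hyperring and let A be an interval valued fuzzy set on R. Then A is an n-ary interval valued fuzzy hyperideal of R if and only if for each interval number s̃ with [0,0] < s̃ ≤ [1,1], the level subset F(A;s̃), whenever nonempty, is a hyperideal of R. -/

import Mathlib

open scoped Classical

/-- Interval numbers on `[0,1]`: pairs `(lo, hi)` of reals with `0 ≤ lo ≤ hi ≤ 1`,
ordered componentwise (the order is inherited from the product order on `ℝ × ℝ`). -/
abbrev IvN : Type := {p : ℝ × ℝ // 0 ≤ p.1 ∧ p.1 ≤ p.2 ∧ p.2 ≤ 1}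

/-- The interval number `[0,0]`. -/
def iv0 : IvN := ⟨(0, 0), by norm_num⟩

/-- The interval number `[1,1]`. -/
def iv1 : IvN := ⟨(1, 1), by norm_num⟩

/-- The interval number `[0.5,0.5]`. -/
def ivHalf : IvN := ⟨(0.5, 0.5), by norm_num⟩

/-- Componentwise infimum of a set of interval numbers (the infimum of the empty
set is `[1,1]`). -/
noncomputable def IvN.sInfAux (S : Set IvN) : IvN :=
  if hS : S.Nonempty then
    ⟨(sInf ((fun x : IvN => x.val.1) '' S), sInf ((fun x : IvN => x.val.2) '' S)), by
      obtain ⟨x0, hx0⟩ := hS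
      have h1 : BddBelow ((fun x : IvN => x.val.1) '' S) :=
        ⟨0, by rintro _ ⟨y, hy, rfl⟩; exact y.2.1⟩
      have h2 : BddBelow ((fun x : IvN => x.val.2) '' S) :=
        ⟨0, by rintro _ ⟨y, hy, rfl⟩; exact y.2.1.trans y.2.2.1⟩
      refine ⟨?_, ?_, ?_⟩
      · exact Real.sInf_nonneg (by rintro _ ⟨y, hy, rfl⟩; exact y.2.1)
      · refine le_csInf ⟨_, Set.mem_image_of_mem _ hx0⟩ ?_
        rintro _ ⟨y, hy, rfl⟩
        exact (csInf_le h1 (Set.mem_image_of_mem _ hy)).trans y.2.2.1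
      · exact (csInf_le h2 (Set.mem_image_of_mem _ hx0)).trans x0.2.2.2⟩
  else iv1

noncomputable instance : InfSet IvN := ⟨IvN.sInfAux⟩

theorem IvN.isGLB_sInf (S : Set IvN) : IsGLB S (sInf S) := by
  show IsGLB S (IvN.sInfAux S)
  by_cases hS : S.Nonempty
  · have h1 : BddBelow ((fun x : IvN => x.val.1) '' S) :=
      ⟨0, by rintro _ ⟨y, hy, rfl⟩; exact y.2.1⟩
    have h2 : BddBelow ((fun x : IvN => x.val.2) '' S) :=
      ⟨0, by rintro _ ⟨y, hy, rfl⟩; exact y.2.1.trans y.2.2.1⟩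
    constructor
    · intro x hx
      show IvN.sInfAux S ≤ x
      unfold IvN.sInfAux
      rw [dif_pos hS]
      exact ⟨csInf_le h1 (Set.mem_image_of_mem _ hx),
             csInf_le h2 (Set.mem_image_of_mem _ hx)⟩
    · intro b hb
      show b ≤ IvN.sInfAux S
      unfold IvN.sInfAux
      rw [dif_pos hS]
      obtain ⟨x0, hx0⟩ := hS
      constructor
      · refine le_csInf ⟨_, Set.mem_image_of_mem _ hx0⟩ ?_
        rintro _ ⟨y, hy, rfl⟩
        exact (hb hy).1
      · refine le_csInf ⟨_, Set.mem_image_of_mem _ hx0⟩ ?_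
        rintro _ ⟨y, hy, rfl⟩
        exact (hb hy).2
  · rw [Set.not_nonempty_iff_eq_empty] at hS
    subst hS
    constructor
    · intro x hx; exact absurd hx (Set.notMem_empty x)
    · intro b _
      show b ≤ IvN.sInfAux ∅
      unfold IvN.sInfAux
      rw [dif_neg (by simp)]
      exact ⟨b.2.2.1.trans b.2.2.2, b.2.2.2⟩

/-- `D[0,1]` is a complete lattice (with the componentwise order). -/
noncomputable instance : CompleteLattice IvN := completeLatticeOfInf IvN IvN.isGLB_sInf

/-- Componentwise minimum `rmin` of two interval numbers. -/
def rminIv (a b : IvN) : IvN :=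
  ⟨(min a.val.1 b.val.1, min a.val.2 b.val.2),
    le_min a.2.1 b.2.1, min_le_min a.2.2.1 b.2.2.1, (min_le_left _ _).trans a.2.2.2⟩

/-- Componentwise maximum `rmax` of two interval numbers. -/
def rmaxIv (a b : IvN) : IvN :=
  ⟨(max a.val.1 b.val.1, max a.val.2 b.val.2),
    a.2.1.trans (le_max_left _ _), max_le_max a.2.2.1 b.2.2.1, max_le a.2.2.2 b.2.2.2⟩

/-- `rmin` of a (nonempty) finite family of interval numbers. -/
noncomputable def rminF {k : ℕ} (hk : 0 < k) (s : Fin k → IvN) : IvN :=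
  Finset.univ.inf' (Finset.univ_nonempty_iff.mpr (Fin.pos_iff_nonempty.mp hk)) s

/-- `rmax` of a (nonempty) finite family of interval numbers. -/
noncomputable def rmaxF {k : ℕ} (hk : 0 < k) (s : Fin k → IvN) : IvN :=
  Finset.univ.sup' (Finset.univ_nonempty_iff.mpr (Fin.pos_iff_nonempty.mp hk)) s

/-- A Krasner `(m,n)`-hyperring: a set `R` with an `m`-ary hyperoperation `f`
(values in nonempty subsets), an `n`-ary operation `g`, a zero element and an
additive inverse map, satisfying the axioms of a canonical `m`-ary hypergroup,
associativity of `g`, distributivity of `g` over `f`, and absorption of `0`. -/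
structure Krasner (m n : ℕ) (R : Type) where
  hm : 2 ≤ m
  hn : 2 ≤ n
  f : (Fin m → R) → Set R
  g : (Fin n → R) → R
  zero : R
  neg : R → R
  f_nonempty : ∀ a, (f a).Nonempty
  f_comm : ∀ (a : Fin m → R) (σ : Equiv.Perm (Fin m)), f (a ∘ σ) = f a
  f_assoc : ∀ (i j : Fin m) (a : Fin (2 * m - 1) → R) (x : R),
    (∃ b ∈ f (fun t => a ⟨i.val + t.val, by have := i.isLt; have := t.isLt; omega⟩),
      x ∈ f (fun k => if k.val < i.val then a ⟨k.val, by have := k.isLt; omega⟩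
        else if k.val = i.val then b
        else a ⟨k.val + m - 1, by have := k.isLt; omega⟩)) ↔
    (∃ b ∈ f (fun t => a ⟨j.val + t.val, by have := j.isLt; have := t.isLt; omega⟩),
      x ∈ f (fun k => if k.val < j.val then a ⟨k.val, by have := k.isLt; omega⟩
        else if k.val = j.val then b
        else a ⟨k.val + m - 1, by have := k.isLt; omega⟩))
  f_zero : ∀ a : R, f (fun k => if k.val = 0 then a else zero) = {a}
  neg_spec : ∀ a : R,
    zero ∈ f (fun k => if k.val = 0 then a else if k.val = 1 then neg a else zero)
  neg_unique : ∀ a b : R,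
    zero ∈ f (fun k => if k.val = 0 then a else if k.val = 1 then b else zero) → b = neg a
  f_rev : ∀ (as : Fin m → R) (x : R), x ∈ f as → ∀ i : Fin m,
    as i ∈ f (fun k => if k.val = 0 then x
      else if k.val ≤ i.val then neg (as ⟨k.val - 1, by have := k.isLt; omega⟩)
      else neg (as k))
  g_assoc : ∀ (i j : Fin n) (a : Fin (2 * n - 1) → R),
    g (fun k => if k.val < i.val then a ⟨k.val, by have := k.isLt; omega⟩
      else if k.val = i.val then
        g (fun t => a ⟨i.val + t.val, by have := i.isLt; have := t.isLt; omega⟩)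
      else a ⟨k.val + n - 1, by have := k.isLt; omega⟩) =
    g (fun k => if k.val < j.val then a ⟨k.val, by have := k.isLt; omega⟩
      else if k.val = j.val then
        g (fun t => a ⟨j.val + t.val, by have := j.isLt; have := t.isLt; omega⟩)
      else a ⟨k.val + n - 1, by have := k.isLt; omega⟩)
  g_distrib : ∀ (i : Fin n) (x : Fin n → R) (a : Fin m → R),
    (fun c => g (Function.update x i c)) '' (f a) = f (fun k => g (Function.update x i (a k)))
  g_zero : ∀ (i : Fin n) (x : Fin n → R), g (Function.update x i zero) = zero

/-- A hyperideal of a Krasner `(m,n)`-hyperring. -/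
def Krasner.IsHyperideal {m n : ℕ} {R : Type} (F : Krasner m n R) (I : Set R) : Prop :=
  I.Nonempty ∧
  (∀ a : Fin m → R, (∀ i, a i ∈ I) → F.f a ⊆ I) ∧
  (∀ a ∈ I, F.neg a ∈ I) ∧
  (∀ (x : Fin n → R) (i : Fin n), x i ∈ I → F.g x ∈ I)

/-- `F(x;s̃) ∈ A` : the fuzzy interval value with support `x` and value `s̃`
belongs to the interval valued fuzzy set `μ`, i.e. `μ x ≥ s̃`. -/
def memIv {R : Type} (μ : R → IvN) (x : R) (s : IvN) : Prop := s ≤ μ x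

/-- `F(x;s̃) q A` : quasi-coincidence, i.e. `μ x + s̃ > [1,1]` (componentwise
addition, `>` in the componentwise order on `ℝ × ℝ`). -/
def qIv {R : Type} (μ : R → IvN) (x : R) (s : IvN) : Prop :=
  ((1 : ℝ), (1 : ℝ)) < (μ x).val + s.val

/-- `F(x;s̃) ∈∨q A`. -/
def inqIv {R : Type} (μ : R → IvN) (x : R) (s : IvN) : Prop :=
  memIv μ x s ∨ qIv μ x s

/-- An n-ary interval valued `(α,β)`-fuzzy hyperideal of a Krasner
`(m,n)`-hyperring, for relations `α β` between fuzzy interval values and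
interval valued fuzzy sets. -/
noncomputable def IsABFuzzyHyperideal {m n : ℕ} {R : Type} (F : Krasner m n R)
    (μ : R → IvN) (α β : (R → IvN) → R → IvN → Prop) : Prop :=
  (∀ s : Fin m → IvN, (∀ i, s i ≠ iv0) → ∀ a : Fin m → R,
    (∀ i, α μ (a i) (s i)) → ∀ x ∈ F.f a,
      β μ x (rminF (lt_of_lt_of_le Nat.zero_lt_two F.hm) s)) ∧
  (∀ t : IvN, t ≠ iv0 → ∀ b : R, α μ b t → β μ (F.neg b) t) ∧
  (∀ t : Fin n → IvN, (∀ i, t i ≠ iv0) → ∀ b : Fin n → R,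
    (∀ i, α μ (b i) (t i)) →
      β μ (F.g b) (rmaxF (lt_of_lt_of_le Nat.zero_lt_two F.hn) t))

/-- An n-ary interval valued fuzzy hyperideal of a Krasner `(m,n)`-hyperring. -/
noncomputable def IsFuzzyHyperideal {m n : ℕ} {R : Type} (F : Krasner m n R)
    (μ : R → IvN) : Prop :=
  (∀ a : Fin m → R,
    rminF (lt_of_lt_of_le Nat.zero_lt_two F.hm) (fun i => μ (a i)) ≤ sInf (μ '' F.f a)) ∧
  (∀ b : R, μ b ≤ μ (F.neg b)) ∧
  (∀ b : Fin n → R,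
    rmaxF (lt_of_lt_of_le Nat.zero_lt_two F.hn) (fun i => μ (b i)) ≤ μ (F.g b))

/-- The interval valued level subset `F(A;s̃) = {x | μ x ≥ s̃}`. -/
def levelSet {R : Type} (μ : R → IvN) (s : IvN) : Set R := {x | s ≤ μ x}

/-- The characteristic interval valued fuzzy set of a subset `I`. -/
noncomputable def chiIv {R : Type} (I : Set R) : R → IvN :=
  fun x => if x ∈ I then iv1 else iv0

/-- An n-ary interval valued fuzzy hyperideal with thresholds `(s₁, s₂)`. -/
noncomputable def IsThresholdFuzzyHyperideal {m n : ℕ} {R : Type} (F : Krasner m n R)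
    (μ : R → IvN) (s1 s2 : IvN) : Prop :=
  (∀ a : Fin m → R,
    rminIv (rminF (lt_of_lt_of_le Nat.zero_lt_two F.hm) (fun i => μ (a i))) s2 ≤
      sInf ((fun x => rmaxIv (μ x) s1) '' F.f a)) ∧
  (∀ b : R, rminIv (μ b) s2 ≤ rmaxIv (μ (F.neg b)) s1) ∧
  (∀ b : Fin n → R,
    rmaxIv (rmaxF (lt_of_lt_of_le Nat.zero_lt_two F.hn) (fun i => μ (b i))) s2 ≤
      rmaxIv (μ (F.g b)) s1)

/-- An n-ary `t̃`-implication-based interval valued fuzzy hyperideal with respect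
to an implication operator `I` (valued in `ℝ × ℝ`, compared componentwise). -/
noncomputable def IsImplicationFuzzyHyperideal {m n : ℕ} {R : Type} (F : Krasner m n R)
    (μ : R → IvN) (I : IvN → IvN → ℝ × ℝ) (t : IvN) : Prop :=
  (∀ a : Fin m → R,
    t.val ≤ I (rminF (lt_of_lt_of_le Nat.zero_lt_two F.hm) (fun i => μ (a i)))
              (sInf (μ '' F.f a))) ∧
  (∀ b : R, t.val ≤ I (μ b) (μ (F.neg b))) ∧
  (∀ b : Fin n → R,
    t.val ≤ I (rmaxF (lt_of_lt_of_le Nat.zero_lt_two F.hn) (fun i => μ (b i)))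
              (μ (F.g b)))

/-- The Gaines–Rescher implication operator. -/
noncomputable def Igr : IvN → IvN → ℝ × ℝ :=
  fun a b => if a ≤ b then ((1 : ℝ), (1 : ℝ)) else ((0 : ℝ), (0 : ℝ))

/-- The Gödel implication operator. -/
noncomputable def Ig : IvN → IvN → ℝ × ℝ :=
  fun a b => if a ≤ b then ((1 : ℝ), (1 : ℝ)) else b.val

/-- The contraposition-of-Gödel implication operator (`[1,1] − α̃` componentwise). -/
noncomputable def Icg : IvN → IvN → ℝ × ℝ :=
  fun a b => if a ≤ b then ((1 : ℝ), (1 : ℝ)) else (1 - a.val.1, 1 - a.val.2)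

/-!
Read at the level `t`, each inequality `t ≤ u` defining a fuzzy hyperideal is one closure
property of the level set `F(A;t)`: `t` is the largest level whose level set contains all the
inputs, and `t ≤ u` puts the output in it. At `t = [0,0]`, which the theorem excludes, the
inequality is trivial because `[0,0]` is the bottom of `D[0,1]`.
-/

lemma iv0_le (x : IvN) : iv0 ≤ x := ⟨x.2.1, x.2.1.trans x.2.2.1⟩

lemma le_iv1 (x : IvN) : x ≤ iv1 := ⟨x.2.2.1.trans x.2.2.2, x.2.2.2⟩

lemma le_of_iv0_lt_imp_le {t u : IvN} (h : iv0 < t → t ≤ u) : t ≤ u := by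
  rcases (iv0_le t).eq_or_lt with rfl | ht
  · exact iv0_le u
  · exact h ht

lemma le_rminF_iff {k : ℕ} (hk : 0 < k) (s : Fin k → IvN) {t : IvN} :
    t ≤ rminF hk s ↔ ∀ i, t ≤ s i := by
  simp [rminF, Finset.le_inf'_iff]

lemma rmaxF_le_iff {k : ℕ} (hk : 0 < k) (s : Fin k → IvN) {t : IvN} :
    rmaxF hk s ≤ t ↔ ∀ i, s i ≤ t := by
  simp [rmaxF, Finset.sup'_le_iff]

section

variable {m n : ℕ} {R : Type} {F : Krasner m n R} {μ : R → IvN}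

lemma mem_levelSet_self (x : R) : x ∈ levelSet μ (μ x) := le_refl (μ x)

lemma mem_levelSet_rminF {k : ℕ} (hk : 0 < k) (a : Fin k → R) (i : Fin k) :
    a i ∈ levelSet μ (rminF hk fun j => μ (a j)) :=
  (le_rminF_iff hk _).1 le_rfl i

lemma IsFuzzyHyperideal.isHyperideal_levelSet (hμ : IsFuzzyHyperideal F μ) {s : IvN}
    (hne : (levelSet μ s).Nonempty) : F.IsHyperideal (levelSet μ s) := by
  obtain ⟨hf, hneg, hg⟩ := hμ
  refine ⟨hne, fun a ha x hx => ?_, fun b hb => hb.trans (hneg b), fun b i hi => ?_⟩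
  · have hs := (le_rminF_iff (Nat.zero_lt_two.trans_le F.hm) (fun i => μ (a i))).2 ha
    exact (hs.trans (hf a)).trans (sInf_le ⟨x, hx, rfl⟩)
  · exact hi.trans (((rmaxF_le_iff _ _).1 (hg b)) i)

lemma isFuzzyHyperideal_of_isHyperideal_levelSet
    (H : ∀ s : IvN, iv0 < s → (levelSet μ s).Nonempty → F.IsHyperideal (levelSet μ s)) :
    IsFuzzyHyperideal F μ := by
  refine ⟨fun a => le_of_iv0_lt_imp_le fun hs => ?_,
    fun b => le_of_iv0_lt_imp_le fun hs => ?_,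
    fun b => (rmaxF_le_iff _ _).2 fun i => le_of_iv0_lt_imp_le fun hs => ?_⟩
  · have ha := mem_levelSet_rminF (μ := μ) (Nat.zero_lt_two.trans_le F.hm) a
    have hI := H _ hs ⟨_, ha ⟨0, by have := F.hm; omega⟩⟩
    exact le_sInf (by rintro _ ⟨x, hx, rfl⟩; exact hI.2.1 a ha hx)
  · exact (H _ hs ⟨b, mem_levelSet_self b⟩).2.2.1 b (mem_levelSet_self b)
  · exact (H _ hs ⟨b i, mem_levelSet_self (b i)⟩).2.2.2 b i (mem_levelSet_self (b i))

end

/-- `μ` is an n-ary interval valued fuzzy hyperideal iff every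
nonempty level subset `F(A;s̃)` with `[0,0] < s̃ ≤ [1,1]` is a hyperideal. -/
theorem statement_6 {m n : ℕ} {R : Type} (F : Krasner m n R) (μ : R → IvN) :
    IsFuzzyHyperideal F μ ↔
      ∀ s : IvN, iv0 < s → s ≤ iv1 → (levelSet μ s).Nonempty →
        F.IsHyperideal (levelSet μ s) :=
  ⟨fun hμ _ _ _ hne => hμ.isHyperideal_levelSet hne,
    fun H => isFuzzyHyperideal_of_isHyperideal_levelSet fun s hs => H s hs (le_iv1 s)⟩
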